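/- If the Lagrangian L is invariant under translations in the direction e ∈ ℝ^n (i.e., L(q + λe, v) = L(q, v) for all λ ∈ ℝ) and there are no forces, then the discrete momentum Σ_{ν=0}^s D_{ν+1}L_d(q⁰,…,q^s) · e = 0 for any multipoint discrete Lagrangian L_d(q⁰,…,q^s) = h Σ_i b_i L(q^d(c_i h), q̇^d(c_i h)); consequently, along solutions of the discrete Euler-Lagrange equations, the quantity D_{s+1}L_d(q_k⁰,…,q_k^s)·e is conserved from step to step (discrete Noether theorem). -/

import Mathlib

/-!
The Lagrange basis polynomials form a partition of unity, `∑_ν P_ν = 1`, so `∑_ν P_ν' = 0`.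
Translating all nodes `q^ν` by `λ e` therefore translates the interpolant `q^d(t)` by `λ e` and
leaves its velocity unchanged, and translation invariance of `L` makes `L_d` invariant under
`q ↦ q + λ (e, …, e)`. Differentiating at `λ = 0` gives `∑_ν D_{ν+1} L_d · e = 0`. Along a solution,
the interior Euler–Lagrange equations kill every term but the first and the last, so
`D_{s+1} L_d(q_{k+1}) · e = -D_1 L_d(q_{k+1}) · e`, which the coupled equation at the macro node
identifies with `D_{s+1} L_d(q_k) · e`.
-/

open Finset

/-- The Lagrange basis polynomial `P_ν(t) = ∏_{μ ≠ ν} (t - d_μ)/(d_ν - d_μ)`. -/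
noncomputable def lagrangeBasis {s : ℕ} (d : Fin (s+1) → ℝ) (ν : Fin (s+1)) (t : ℝ) : ℝ :=
  ∏ μ ∈ Finset.univ.erase ν, (t - d μ) / (d ν - d μ)

/-- The multipoint discrete Lagrangian
`L_d(q⁰,…,q^s) = h ∑_i b_i L(q^d(c_i h), q̇^d(c_i h))`. -/
noncomputable def multipointLd {n s r : ℕ} (h : ℝ) (d : Fin (s+1) → ℝ)
    (c b : Fin r → ℝ)
    (L : (Fin n → ℝ) → (Fin n → ℝ) → ℝ)
    (qs : Fin (s+1) → (Fin n → ℝ)) : ℝ :=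
  h * ∑ i, b i * L (∑ ν, lagrangeBasis d ν (c i) • qs ν)
    ((1/h) • ∑ ν, deriv (lagrangeBasis d ν) (c i) • qs ν)

theorem fderiv_apply_eq_zero_of_add_smul_eq {𝕜 E F : Type*} [NontriviallyNormedField 𝕜]
    [NormedAddCommGroup E] [NormedSpace 𝕜 E] [NormedAddCommGroup F] [NormedSpace 𝕜 F]
    {f : E → F} {x v : E} (hf : ∀ t : 𝕜, f (x + t • v) = f x) :
    fderiv 𝕜 f x v = 0 := by
  by_cases hdiff : DifferentiableAt 𝕜 f x
  · rw [← hdiff.lineDeriv_eq_fderiv, lineDeriv, funext hf, deriv_const]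
  · rw [fderiv_zero_of_not_differentiableAt hdiff, zero_apply]

section Lagrange

variable {s : ℕ} {d : Fin (s+1) → ℝ}

theorem lagrangeBasis_eq_eval (d : Fin (s+1) → ℝ) (ν : Fin (s+1)) (t : ℝ) :
    lagrangeBasis d ν t = (Lagrange.basis univ d ν).eval t := by
  simp only [lagrangeBasis, Lagrange.basis, Lagrange.basisDivisor, Polynomial.eval_prod,
    Polynomial.eval_mul, Polynomial.eval_C, Polynomial.eval_sub, Polynomial.eval_X]
  exact prod_congr rfl fun μ _ => by rw [div_eq_mul_inv, mul_comm]

theorem sum_lagrangeBasis (hd : Function.Injective d) (t : ℝ) :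
    ∑ ν, lagrangeBasis d ν t = 1 := by
  simp only [lagrangeBasis_eq_eval, ← Polynomial.eval_finsetSum,
    Lagrange.sum_basis hd.injOn univ_nonempty, Polynomial.eval_one]

theorem sum_deriv_lagrangeBasis (hd : Function.Injective d) (t : ℝ) :
    ∑ ν, deriv (lagrangeBasis d ν) t = 0 := by
  simp only [funext (lagrangeBasis_eq_eval d _), Polynomial.deriv, ← Polynomial.eval_finsetSum,
    ← map_sum, Lagrange.sum_basis hd.injOn univ_nonempty, Polynomial.derivative_one,
    Polynomial.eval_zero]

end Lagrange

section Noether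

variable {n s r : ℕ} {h : ℝ} {d : Fin (s+1) → ℝ} {c b : Fin r → ℝ}
  {L : (Fin n → ℝ) → (Fin n → ℝ) → ℝ} {e : Fin n → ℝ}

theorem multipointLd_add_smul_const (hd : Function.Injective d)
    (hinv : ∀ (x v : Fin n → ℝ) (lam : ℝ), L (x + lam • e) v = L x v)
    (qs : Fin (s+1) → (Fin n → ℝ)) (lam : ℝ) :
    multipointLd h d c b L (qs + lam • fun _ => e) = multipointLd h d c b L qs := by
  simp only [multipointLd, Pi.add_apply, Pi.smul_apply, smul_add, sum_add_distrib, ← sum_smul,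
    sum_lagrangeBasis hd, sum_deriv_lagrangeBasis hd, one_smul, zero_smul, add_zero, hinv]

theorem sum_fderiv_multipointLd_single_eq_zero (hd : Function.Injective d)
    (hinv : ∀ (x v : Fin n → ℝ) (lam : ℝ), L (x + lam • e) v = L x v)
    (qs : Fin (s+1) → (Fin n → ℝ)) :
    ∑ ν, fderiv ℝ (multipointLd h d c b L) qs (Pi.single ν e) = 0 := by
  rw [← map_sum, univ_sum_single (fun _ => e)]
  exact fderiv_apply_eq_zero_of_add_smul_eq (multipointLd_add_smul_const hd hinv qs)

end Noether

theorem discrete_noether_translation_general {n s r N : ℕ} (hs : 1 ≤ s)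
    (h : ℝ)
    (d : Fin (s+1) → ℝ) (hd : Function.Injective d)
    (c b : Fin r → ℝ)
    (L : (Fin n → ℝ) → (Fin n → ℝ) → ℝ)
    (e : Fin n → ℝ)
    (hinv : ∀ (x v : Fin n → ℝ) (lam : ℝ), L (x + lam • e) v = L x v) :
    (∀ qs : Fin (s+1) → (Fin n → ℝ),
        ∑ ν, fderiv ℝ (multipointLd h d c b L) qs (Pi.single ν e) = 0) ∧
    (∀ q : ℕ → Fin (s+1) → (Fin n → ℝ),
      -- interior discrete Euler–Lagrange equations (no forces)
      (∀ k, k < N → ∀ ν : Fin (s+1), ν ≠ 0 → ν ≠ Fin.last s →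
        ∀ w : Fin n → ℝ, fderiv ℝ (multipointLd h d c b L) (q k) (Pi.single ν w) = 0) →
      -- the coupled discrete Euler–Lagrange equation at the macro nodes
      (∀ k, k + 1 < N → ∀ w : Fin n → ℝ,
        fderiv ℝ (multipointLd h d c b L) (q k) (Pi.single (Fin.last s) w)
          + fderiv ℝ (multipointLd h d c b L) (q (k+1)) (Pi.single 0 w) = 0) →
      ∀ k, k + 1 < N →
        fderiv ℝ (multipointLd h d c b L) (q (k+1)) (Pi.single (Fin.last s) e)
          = fderiv ℝ (multipointLd h d c b L) (q k) (Pi.single (Fin.last s) e)) := by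
  refine ⟨sum_fderiv_multipointLd_single_eq_zero hd hinv, fun q hinterior hcoupled k hk => ?_⟩
  have : NeZero s := ⟨by omega⟩
  have hmomentum :=
    sum_fderiv_multipointLd_single_eq_zero (h := h) (c := c) (b := b) hd hinv (q (k+1))
  rw [Fintype.sum_eq_add 0 (Fin.last s) Fin.last_pos'.ne
    fun ν hν => hinterior (k+1) hk ν hν.1 hν.2 e] at hmomentum
  linarith [hcoupled k hk e]

/-- Discrete Noether theorem for translation symmetry: if `L` is invariant
under translations in the direction `e` and there are no forces, then
`∑_ν D_{ν+1}L_d · e = 0`, and along solutions of the discrete Euler–Lagrange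
equations the discrete momentum `D_{s+1}L_d(q_k⁰,…,q_k^s)·e` is conserved. -/
theorem discrete_noether_translation {n s r N : ℕ} (hs : 1 ≤ s)
    (h : ℝ) (hh : 0 < h)
    (d : Fin (s+1) → ℝ) (hd : Function.Injective d)
    (hmem : ∀ ν, d ν ∈ Set.Icc (0:ℝ) 1)
    (c b : Fin r → ℝ) (hc : ∀ i, c i ∈ Set.Icc (0:ℝ) 1)
    (L : (Fin n → ℝ) → (Fin n → ℝ) → ℝ) (hL : ContDiff ℝ 1 (fun p : (Fin n → ℝ) × (Fin n → ℝ) => L p.1 p.2))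
    (e : Fin n → ℝ)
    (hinv : ∀ (x v : Fin n → ℝ) (lam : ℝ), L (x + lam • e) v = L x v) :
    (∀ qs : Fin (s+1) → (Fin n → ℝ),
        ∑ ν, fderiv ℝ (multipointLd h d c b L) qs (Pi.single ν e) = 0) ∧
    (∀ q : ℕ → Fin (s+1) → (Fin n → ℝ),
      -- interior discrete Euler–Lagrange equations (no forces)
      (∀ k, k < N → ∀ ν : Fin (s+1), ν ≠ 0 → ν ≠ Fin.last s →
        ∀ w : Fin n → ℝ, fderiv ℝ (multipointLd h d c b L) (q k) (Pi.single ν w) = 0) →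
      -- the coupled discrete Euler–Lagrange equation at the macro nodes
      (∀ k, k + 1 < N → ∀ w : Fin n → ℝ,
        fderiv ℝ (multipointLd h d c b L) (q k) (Pi.single (Fin.last s) w)
          + fderiv ℝ (multipointLd h d c b L) (q (k+1)) (Pi.single 0 w) = 0) →
      ∀ k, k + 1 < N →
        fderiv ℝ (multipointLd h d c b L) (q (k+1)) (Pi.single (Fin.last s) e)
          = fderiv ℝ (multipointLd h d c b L) (q k) (Pi.single (Fin.last s) e)) :=
  discrete_noether_translation_general hs h d hd c b L e hinv
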